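/- Let τ ∈ [0,1) and let p1, p2 ≥ 0 be integers with p1 + p2 even. Let S := {(x,y) ∈ ℝ² : (x/(1+τ))² + (y/(1−τ))² ≤ 1} be the closed ellipse with semi-axes 1+τ and 1−τ. Then (1/(π·(1−τ²))) · ∫∫_S (x+iy)^{p1}·(x−iy)^{p2} dx dy = C1(p1,p2). In other words, the mixed moments of the elliptic law, the uniform probability measure on S, are given by C1(p1,p2). -/

import Mathlib

/-!
Under `(x, y) ↦ ((1 + τ) x, (1 - τ) y)` the unit disk goes onto the ellipse with Jacobian
`1 - τ²`, and in the complex coordinate `z = x + iy` the point `z` goes to `z + τ z̄`. Expanding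
`(z + τ z̄)^p1 (z̄ + τ z)^p2` binomially, only the monomials `z^a z̄^a` survive integration over
the disk, since in polar coordinates `∫_D z^a z̄^b = π/(a+1) δ_ab`. The surviving index pairs
`(j, k)` are parametrised by `r = p1 - 2j = p2 - 2k ∈ I_{min(p1,p2)}`, which gives `C1`.
-/

open Finset MeasureTheory

/-- Binomial coefficient `binom(n, m)` for `n : ℕ`, `m : ℤ`, zero for `m < 0` or `m > n`. -/
noncomputable def zbinom (n : ℕ) (m : ℤ) : ℝ :=
  if 0 ≤ m ∧ m ≤ (n : ℤ) then (n.choose m.toNat : ℝ) else 0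

/-- `I_p = {−p, −p+2, …, p−2, p}`, the integers between `−p` and `p` with the parity of `p`. -/
noncomputable def Ip (p : ℕ) : Finset ℤ :=
  (Finset.Icc (-(p : ℤ)) (p : ℤ)).filter fun r => r % 2 = (p : ℤ) % 2

/-- The mixed moments `C1(p1, p2)` of the elliptic law:
`C1(p1,p2) = (1/((p1+p2)/2+1)) ∑_{r ∈ I_{min(p1,p2)}} τ^{(p1+p2)/2+r}
  binom(p1,(p1+r)/2) binom(p2,(p2+r)/2)`. -/
noncomputable def C1 (τ : ℝ) (p1 p2 : ℕ) : ℝ :=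
  (((p1 + p2) / 2 + 1 : ℕ) : ℝ)⁻¹ *
    ∑ r ∈ Ip (min p1 p2),
      τ ^ (((((p1 : ℤ) + p2) / 2) + r).toNat) *
        zbinom p1 (((p1 : ℤ) + r) / 2) * zbinom p2 (((p2 : ℤ) + r) / 2)

open Complex (I)

theorem setIntegral_comp_polarCoord_symm {E : Type*} [NormedAddCommGroup E] [NormedSpace ℝ E]
    {s : Set (ℝ × ℝ)} (hs : MeasurableSet s) (f : ℝ × ℝ → E) :
    ∫ p in polarCoord.target ∩ polarCoord.symm ⁻¹' s, p.1 • f (polarCoord.symm p) =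
      ∫ q in s, f q := by
  rw [← integral_indicator hs, ← integral_comp_polarCoord_symm,
    ← setIntegral_indicator (hs.preimage continuous_polarCoord_symm.measurable)]
  congr 1 with p
  by_cases hp : polarCoord.symm p ∈ s
  · rw [Set.indicator_of_mem hp, Set.indicator_of_mem (show p ∈ polarCoord.symm ⁻¹' s from hp)]
  · rw [Set.indicator_of_notMem hp,
      Set.indicator_of_notMem (show p ∉ polarCoord.symm ⁻¹' s from hp), smul_zero]

theorem integral_exp_int_mul_mul_I (n : ℤ) :
    ∫ θ in -Real.pi..Real.pi, Complex.exp (n * θ * I) = if n = 0 then 2 * Real.pi else 0 := by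
  split_ifs with hn
  · simp [hn, two_mul]
  · have := intervalIntegral.integral_comp_mul_left (fun t : ℝ => Complex.exp (t * I))
      (Int.cast_ne_zero.mpr hn : (n : ℝ) ≠ 0) (a := -Real.pi) (b := Real.pi)
    push_cast at this
    rw [this, mul_neg, integral_exp_mul_I_eq_sin, Real.sin_int_mul_pi]
    simp

lemma integral_Ioc_zero_one_ofReal_pow (n : ℕ) :
    ∫ r in Set.Ioc (0 : ℝ) 1, (r : ℂ) ^ n = 1 / (n + 1) := by
  rw [← intervalIntegral.integral_of_le zero_le_one]
  simp_rw [← Complex.ofReal_pow]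
  rw [intervalIntegral.integral_ofReal, integral_pow]
  push_cast
  simp

lemma monomial_polarCoord_symm (a b : ℕ) (p : ℝ × ℝ) :
    (((polarCoord.symm p).1 : ℂ) + (polarCoord.symm p).2 * I) ^ a *
      (((polarCoord.symm p).1 : ℂ) - (polarCoord.symm p).2 * I) ^ b =
      (p.1 : ℂ) ^ (a + b) * Complex.exp (((a : ℤ) - b : ℤ) * p.2 * I) := by
  have h₁ : ((polarCoord.symm p).1 : ℂ) + (polarCoord.symm p).2 * I =
      p.1 * Complex.exp (p.2 * I) := by
    rw [Complex.exp_mul_I, polarCoord_symm_apply]; push_cast; ring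
  have h₂ : ((polarCoord.symm p).1 : ℂ) - (polarCoord.symm p).2 * I =
      p.1 * Complex.exp (-p.2 * I) := by
    rw [Complex.exp_mul_I, polarCoord_symm_apply, Complex.cos_neg, Complex.sin_neg]
    push_cast; ring
  rw [h₁, h₂, mul_pow, mul_pow, ← Complex.exp_nat_mul, ← Complex.exp_nat_mul, pow_add,
    mul_mul_mul_comm, ← Complex.exp_add]
  push_cast
  congr 2
  ring

theorem add_mul_pow_mul_add_mul_pow {R : Type*} [CommSemiring R] (z w t : R) (m n : ℕ) :
    (z + t * w) ^ m * (w + t * z) ^ n = ∑ x ∈ range (m + 1) ×ˢ range (n + 1),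
      (m.choose x.1 * n.choose x.2 * t ^ ((m - x.1) + (n - x.2)) : R) *
        (z ^ (x.1 + (n - x.2)) * w ^ ((m - x.1) + x.2)) := by
  rw [add_pow, add_pow, sum_mul_sum, ← sum_product']
  refine sum_congr rfl fun x _ => ?_
  ring

def unitDisk : Set (ℝ × ℝ) := {q | q.1 ^ 2 + q.2 ^ 2 ≤ 1}

lemma measurableSet_unitDisk : MeasurableSet unitDisk :=
  measurableSet_le (by fun_prop) (by fun_prop)

lemma isCompact_unitDisk : IsCompact unitDisk := by
  have hbox : IsCompact (Set.Icc (-1 : ℝ) 1 ×ˢ Set.Icc (-1 : ℝ) 1) :=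
    isCompact_Icc.prod isCompact_Icc
  refine hbox.of_isClosed_subset (isClosed_le (by fun_prop) (by fun_prop))
    fun q (hq : q.1 ^ 2 + q.2 ^ 2 ≤ 1) => ?_
  simp only [Set.mem_prod, Set.mem_Icc, ← abs_le, ← sq_le_one_iff_abs_le_one]
  constructor <;> nlinarith [sq_nonneg q.1, sq_nonneg q.2]

lemma polarCoord_symm_mem_unitDisk_iff (p : ℝ × ℝ) :
    polarCoord.symm p ∈ unitDisk ↔ p.1 ^ 2 ≤ 1 := by
  simp only [unitDisk, Set.mem_ofPred_eq, polarCoord_symm_apply, mul_pow, ← mul_add,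
    Real.cos_sq_add_sin_sq, mul_one]

lemma polarCoord_target_inter_preimage_unitDisk :
    polarCoord.target ∩ polarCoord.symm ⁻¹' unitDisk =
      Set.Ioc 0 1 ×ˢ Set.Ioo (-Real.pi) Real.pi := by
  ext ⟨r, θ⟩
  simp only [polarCoord_target, Set.mem_inter_iff, Set.mem_preimage,
    polarCoord_symm_mem_unitDisk_iff, Set.mem_prod, Set.mem_Ioi, Set.mem_Ioc]
  constructor
  · rintro ⟨⟨hr, hθ⟩, h⟩; exact ⟨⟨hr, by nlinarith⟩, hθ⟩
  · rintro ⟨⟨hr, h⟩, hθ⟩; exact ⟨⟨hr, hθ⟩, by nlinarith⟩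

theorem integral_unitDisk_monomial (a b : ℕ) :
    ∫ q in unitDisk, ((q.1 : ℂ) + q.2 * I) ^ a * ((q.1 : ℂ) - q.2 * I) ^ b =
      if a = b then (Real.pi / (a + 1) : ℂ) else 0 := by
  rw [← setIntegral_comp_polarCoord_symm measurableSet_unitDisk,
    polarCoord_target_inter_preimage_unitDisk]
  simp_rw [monomial_polarCoord_symm, Complex.real_smul, ← mul_assoc, ← pow_succ']
  rw [Measure.volume_eq_prod, setIntegral_prod_mul (fun r : ℝ => (r : ℂ) ^ (a + b + 1))
    (fun θ : ℝ => Complex.exp (((a : ℤ) - b : ℤ) * θ * I)), integral_Ioc_zero_one_ofReal_pow,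
    ← integral_Ioc_eq_integral_Ioo, ← intervalIntegral.integral_of_le (by linarith [Real.pi_pos]),
    integral_exp_int_mul_mul_I]
  simp only [sub_eq_zero, Nat.cast_inj]
  split_ifs with hab
  · subst hab
    have : (a : ℂ) + 1 ≠ 0 := Nat.cast_add_one_ne_zero a
    push_cast
    rw [show (a : ℂ) + a + 1 + 1 = 2 * (a + 1) by ring]
    field_simp
  · simp

theorem integral_unitDisk_sum_monomial {ι : Type*} (s : Finset ι) (c : ι → ℂ) (a b : ι → ℕ) :
    ∫ q in unitDisk, ∑ i ∈ s, c i * (((q.1 : ℂ) + q.2 * I) ^ a i * ((q.1 : ℂ) - q.2 * I) ^ b i) =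
      ∑ i ∈ s, c i * if a i = b i then (Real.pi / (a i + 1) : ℂ) else 0 := by
  rw [integral_finsetSum _ fun i _ =>
    (by fun_prop : Continuous _).continuousOn.integrableOn_compact isCompact_unitDisk]
  simp_rw [integral_const_mul, integral_unitDisk_monomial]

lemma ellipse_eq_image_unitDisk {a b : ℝ} (ha : a ≠ 0) (hb : b ≠ 0) :
    {q : ℝ × ℝ | (q.1 / a) ^ 2 + (q.2 / b) ^ 2 ≤ 1} =
      (fun q : ℝ × ℝ => (a * q.1, b * q.2)) '' unitDisk := by
  ext ⟨x, y⟩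
  constructor
  · intro h
    exact ⟨(x / a, y / b), h, by simp [mul_div_cancel₀, ha, hb]⟩
  · rintro ⟨⟨u, v⟩, h, huv⟩
    simp only [Prod.mk.injEq] at huv
    obtain ⟨rfl, rfl⟩ := huv
    simpa [ha, hb, unitDisk] using h

theorem setIntegral_ellipse {E : Type*} [NormedAddCommGroup E] [NormedSpace ℝ E]
    {a b : ℝ} (ha : a ≠ 0) (hb : b ≠ 0) (g : ℝ × ℝ → E) :
    ∫ q in {q : ℝ × ℝ | (q.1 / a) ^ 2 + (q.2 / b) ^ 2 ≤ 1}, g q =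
      |a * b| • ∫ q in unitDisk, g (a * q.1, b * q.2) := by
  set L : ℝ × ℝ →L[ℝ] ℝ × ℝ := LinearMap.toContinuousLinearMap
    (Matrix.toLin (Module.Basis.finTwoProd ℝ) (Module.Basis.finTwoProd ℝ) !![a, 0; 0, b])
  have hL : ∀ q, L q = (a * q.1, b * q.2) := fun q => by
    simp [L, Matrix.toLin_finTwoProd_apply]
  have hdet : L.det = a * b := by
    simp [L, LinearMap.det_toContinuousLinearMap, LinearMap.det_toLin]
  have hinj : Set.InjOn (fun q : ℝ × ℝ => (a * q.1, b * q.2)) unitDisk := by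
    rintro ⟨u, v⟩ _ ⟨u', v'⟩ _ h
    simp only [Prod.mk.injEq, mul_right_inj' ha, mul_right_inj' hb] at h
    rw [h.1, h.2]
  have hderiv : ∀ q, HasFDerivAt (fun q : ℝ × ℝ => (a * q.1, b * q.2)) L q := fun q => by
    convert L.hasFDerivAt using 1
    exact funext fun q => (hL q).symm
  rw [ellipse_eq_image_unitDisk ha hb, integral_image_eq_integral_abs_det_fderiv_smul volume
    measurableSet_unitDisk (fun q _ => (hderiv q).hasFDerivWithinAt) hinj g, hdet, integral_smul]

theorem sum_choose_mul_diagonal_eq_C1 (τ : ℝ) {m n : ℕ} (hpar : m % 2 = n % 2) :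
    ∑ x ∈ range (m + 1) ×ˢ range (n + 1),
      (m.choose x.1 * n.choose x.2 * τ ^ ((m - x.1) + (n - x.2)) : ℝ) *
        (if x.1 + (n - x.2) = (m - x.1) + x.2 then (((x.1 + (n - x.2) : ℕ) : ℝ) + 1)⁻¹ else 0) =
      C1 τ m n := by
  simp_rw [mul_ite, mul_zero]
  rw [C1, mul_sum, ← sum_filter]
  refine sum_nbij' (fun x => (m : ℤ) - 2 * x.1)
    (fun r => ((((m : ℤ) - r) / 2).toNat, (((n : ℤ) - r) / 2).toNat)) ?_ ?_ ?_ ?_ ?_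
  · rintro ⟨j, k⟩ hx
    simp only [mem_filter, mem_product, mem_range] at hx
    simp only [Ip, mem_filter, mem_Icc]
    omega
  · rintro r hr
    simp only [Ip, mem_filter, mem_Icc] at hr
    simp only [mem_filter, mem_product, mem_range]
    omega
  · rintro ⟨j, k⟩ hx
    simp only [mem_filter, mem_product, mem_range] at hx
    simp only [Prod.mk.injEq]
    omega
  · rintro r hr
    simp only [Ip, mem_filter, mem_Icc] at hr
    dsimp only
    omega
  · rintro ⟨j, k⟩ hx
    simp only [mem_filter, mem_product, mem_range] at hx
    obtain ⟨⟨hj, hk⟩, hdiag⟩ := hx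
    have e1 : ((m : ℤ) + ((m : ℤ) - 2 * j)) / 2 = ((m - j : ℕ) : ℤ) := by omega
    have e2 : ((n : ℤ) + ((m : ℤ) - 2 * j)) / 2 = ((n - k : ℕ) : ℤ) := by omega
    have e3 : ((((m : ℤ) + n) / 2) + ((m : ℤ) - 2 * j)).toNat = (m - j) + (n - k) := by omega
    have e4 : j + (n - k) = (m + n) / 2 := by omega
    simp only [e1, e2, e3, e4, zbinom, Int.toNat_natCast, Nat.choose_symm (Nat.le_of_lt_succ hj),
      Nat.choose_symm (Nat.le_of_lt_succ hk), Int.natCast_nonneg, Nat.cast_le, Nat.sub_le,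
      and_self, if_true]
    push_cast
    ring

theorem elliptic_law_mixed_moments (τ : ℝ) (hτ0 : 0 ≤ τ) (hτ1 : τ < 1)
    (p1 p2 : ℕ) (hpar : p1 % 2 = p2 % 2) :
    ((1 / (Real.pi * (1 - τ ^ 2)) : ℝ) : ℂ) *
        ∫ q : ℝ × ℝ in {q : ℝ × ℝ | (q.1 / (1 + τ)) ^ 2 + (q.2 / (1 - τ)) ^ 2 ≤ 1},
          ((q.1 : ℂ) + (q.2 : ℂ) * Complex.I) ^ p1 * ((q.1 : ℂ) - (q.2 : ℂ) * Complex.I) ^ p2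
      = ((C1 τ p1 p2 : ℝ) : ℂ) := by
  have hdet : |(1 + τ) * (1 - τ)| = 1 - τ ^ 2 := by
    rw [abs_of_pos (by nlinarith)]; ring
  have hexpand (q : ℝ × ℝ) :
      ((((1 + τ) * q.1 : ℝ) : ℂ) + (((1 - τ) * q.2 : ℝ) : ℂ) * I) ^ p1 *
        ((((1 + τ) * q.1 : ℝ) : ℂ) - (((1 - τ) * q.2 : ℝ) : ℂ) * I) ^ p2 =
      (((q.1 : ℂ) + q.2 * I) + τ * ((q.1 : ℂ) - q.2 * I)) ^ p1 *
        (((q.1 : ℂ) - q.2 * I) + τ * ((q.1 : ℂ) + q.2 * I)) ^ p2 := by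
    push_cast; ring
  have hdiag : ∑ x ∈ range (p1 + 1) ×ˢ range (p2 + 1),
      (p1.choose x.1 * p2.choose x.2 * (τ : ℂ) ^ ((p1 - x.1) + (p2 - x.2)) : ℂ) *
        (if x.1 + (p2 - x.2) = (p1 - x.1) + x.2 then
          (Real.pi / ((x.1 + (p2 - x.2) : ℕ) + 1) : ℂ) else 0) =
      Real.pi * (C1 τ p1 p2 : ℂ) := by
    rw [← sum_choose_mul_diagonal_eq_C1 τ hpar, Complex.ofReal_sum, mul_sum]
    refine sum_congr rfl fun x _ => ?_
    split_ifs <;> push_cast <;> ring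
  rw [setIntegral_ellipse (by linarith) (by linarith), hdet]
  simp_rw [hexpand, add_mul_pow_mul_add_mul_pow]
  rw [integral_unitDisk_sum_monomial, hdiag]
  have hτ2 : (1 : ℂ) - τ ^ 2 ≠ 0 := by exact_mod_cast (by nlinarith : (1 : ℝ) - τ ^ 2 ≠ 0)
  rw [Complex.real_smul]
  push_cast
  field_simp
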